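/- The convolution (under subtraction/addition of coordinates) of two integer measures supported in B̄(0,λ) is an integer measure supported in B̄(0,2λ). -/

import Mathlib

open MeasureTheory Polynomial Filter

noncomputable def rootsC (p : Polynomial ℤ) : Multiset ℂ :=
  (p.map (Int.castRingHom ℂ)).roots

noncomputable def Delta (p : Polynomial ℤ) : Measure ℂ :=
  (p.natDegree : ENNReal)⁻¹ • ((rootsC p).map (fun α => (Measure.dirac α))).sum

def WeakLim (μs : ℕ → Measure ℂ) (μ : Measure ℂ) : Prop :=
  ∀ f : BoundedContinuousFunction ℂ ℝ,
    Tendsto (fun n => ∫ z, f z ∂(μs n)) atTop (nhds (∫ z, f z ∂μ))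

def IsIntegerMeasure (μ : Measure ℂ) : Prop :=
  IsProbabilityMeasure μ ∧
    ∃ (p : ℕ → Polynomial ℤ) (l : ℝ),
      (∀ n, (p n).Monic) ∧
      (∀ n, ∀ α ∈ rootsC (p n), ‖α‖ ≤ l) ∧
      WeakLim (fun n => Delta (p n)) μ

/-!
For monic `p, q ∈ ℤ[X]` the resultant `r(x) = Res_Y (p(Y), q(x - Y))` is a monic integer
polynomial whose roots are the sums `α + β` of a root of `p` and a root of `q`, so
`Δ(p) ∗ Δ(q) = Δ(r)`. Convolution is the push-forward of the product measure under addition, and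
both the product and the push-forward along a continuous map are continuous for weak convergence
of probability measures; hence `Δ(pₙ) ∗ Δ(qₙ) = Δ(rₙ)` converges to `μ ∗ ν`. Constant `pₙ` give
`Δ(pₙ) = 0`, which weak convergence to a probability measure rules out for large `n`.
-/

open scoped ENNReal Topology

namespace Polynomial

variable {R K : Type*} [CommRing R] [Field K] [IsAlgClosed K]

/-- The resultant `Res_Y (p(Y), q(x - Y))`, as a polynomial in `x`. -/
noncomputable def addResultant (p q : R[X]) : R[X] :=
  resultant (p.map C) ((q.map C).comp (C X - X)) p.natDegree q.natDegree

theorem eval_map_addResultant (ι : R →+* K) {p q : R[X]} (hp : p.Monic) (hq : q.Monic) (x : K) :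
    ((addResultant p q).map ι).eval x =
      (((p.map ι).roots ×ˢ (q.map ι).roots).map fun ab => x - (ab.1 + ab.2)).prod := by
  have hφC : (eval₂RingHom ι x).comp C = ι := RingHom.ext fun a => eval₂_C ι x
  have hdeg : ((q.map ι).comp (C x - X)).natDegree ≤ q.natDegree := by
    have hlin : (C x - X).natDegree ≤ 1 := by compute_degree
    calc _ ≤ (q.map ι).natDegree * (C x - X).natDegree := natDegree_comp_le
      _ ≤ q.natDegree * 1 := by rw [hq.natDegree_map]; gcongr
      _ = q.natDegree := mul_one _
  have hq_eval : ∀ y, (q.map ι).eval y = ((q.map ι).roots.map fun b => y - b).prod := by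
    intro y
    conv_lhs => rw [(IsAlgClosed.splits (q.map ι)).eq_prod_roots_of_monic (hq.map ι)]
    simp [eval_multiset_prod]
  rw [eval_map, ← coe_eval₂RingHom, addResultant, ← resultant_map_map, Polynomial.map_map, hφC,
    Polynomial.map_comp, Polynomial.map_map, hφC, Polynomial.map_sub, Polynomial.map_X,
    Polynomial.map_C, coe_eval₂RingHom, eval₂_X, ← hp.natDegree_map ι,
    resultant_eq_prod_eval _ _ _ hdeg (IsAlgClosed.splits _), (hp.map ι).leadingCoeff, one_pow,
    one_mul, Multiset.prod_map_product_eq_prod_prod]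
  simp only [eval_comp, eval_sub, eval_C, eval_X, hq_eval, sub_sub]

theorem exists_monic_map_roots_eq_add (ι : R →+* K) (hι : Function.Injective ι) {p q : R[X]}
    (hp : p.Monic) (hq : q.Monic) :
    ∃ r : R[X], r.Monic ∧
      (r.map ι).roots = ((p.map ι).roots ×ˢ (q.map ι).roots).map fun ab => ab.1 + ab.2 := by
  set S := ((p.map ι).roots ×ˢ (q.map ι).roots).map fun ab => ab.1 + ab.2
  have hr : (addResultant p q).map ι = (S.map fun s => X - C s).prod := by
    refine Polynomial.funext fun x => ?_
    rw [eval_map_addResultant ι hp hq, eval_multiset_prod, Multiset.map_map, Multiset.map_map]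
    simp
  refine ⟨addResultant p q, monic_of_injective hι ?_, by rw [hr, roots_multiset_prod_X_sub_C]⟩
  rw [hr]
  exact monic_multiset_prod_of_monic _ _ fun s _ => monic_X_sub_C s

end Polynomial

namespace MeasureTheory.Measure

section Empirical

variable {α : Type*} [MeasurableSpace α]

noncomputable def empirical (s : Multiset α) : Measure α :=
  (Multiset.card s : ℝ≥0∞)⁻¹ • (s.map dirac).sum

@[simp]
theorem empirical_zero : empirical (0 : Multiset α) = 0 := by
  simp [empirical]

instance isFiniteMeasure_multiset_sum_dirac (s : Multiset α) :
    IsFiniteMeasure (s.map dirac).sum := by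
  induction s using Multiset.induction_on with
  | empty => simp only [Multiset.map_zero, Multiset.sum_zero]; infer_instance
  | cons a s ih => rw [Multiset.map_cons, Multiset.sum_cons]; infer_instance

theorem multiset_sum_dirac_apply_univ (s : Multiset α) :
    (s.map dirac).sum Set.univ = Multiset.card s := by
  induction s using Multiset.induction_on with
  | empty => simp
  | cons a s ih => simp [ih, add_comm]

theorem isProbabilityMeasure_empirical {s : Multiset α} (hs : s ≠ 0) :
    IsProbabilityMeasure (empirical s) := by
  constructor
  rw [empirical, smul_apply, multiset_sum_dirac_apply_univ, smul_eq_mul,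
    ENNReal.inv_mul_cancel (by simpa using hs) (by simp)]

end Empirical

section Conv

variable {M : Type*} [AddMonoid M] [MeasurableSpace M] [MeasurableAdd₂ M]

theorem dirac_conv_multiset_sum_dirac (a : M) (t : Multiset M) :
    dirac a ∗ (t.map dirac).sum = (t.map fun b => dirac (a + b)).sum := by
  induction t using Multiset.induction_on with
  | empty => simp
  | cons b t ih => simp [conv_add, ih]

theorem multiset_sum_dirac_conv (s t : Multiset M) :
    (s.map dirac).sum ∗ (t.map dirac).sum =
      ((s ×ˢ t).map fun ab => dirac (ab.1 + ab.2)).sum := by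
  induction s using Multiset.induction_on with
  | empty => simp
  | cons a s ih => simp [add_conv, ih, dirac_conv_multiset_sum_dirac, Multiset.cons_product]

theorem empirical_conv (s t : Multiset M) :
    empirical s ∗ empirical t = empirical ((s ×ˢ t).map fun ab => ab.1 + ab.2) := by
  rw [empirical, empirical, empirical, conv_smul_left, conv_smul_right, smul_smul,
    multiset_sum_dirac_conv, Multiset.map_map, Multiset.card_map, Multiset.card_product,
    Nat.cast_mul, ENNReal.mul_inv (by simp) (by simp)]
  rfl

end Conv

theorem conv_compl_closedBall_null {E : Type*} [SeminormedAddCommGroup E] [MeasurableSpace E]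
    [MeasurableAdd₂ E] [OpensMeasurableSpace E] {μ ν : Measure E} {a b : ℝ}
    (hμ : μ (Metric.closedBall 0 a)ᶜ = 0) (hν : ν (Metric.closedBall 0 b)ᶜ = 0) :
    (μ ∗ ν) (Metric.closedBall 0 (a + b))ᶜ = 0 := by
  have hμ' : ∀ᵐ x ∂μ, x ∈ Metric.closedBall (0 : E) a := ae_iff.2 hμ
  have hν' : ∀ᵐ y ∂ν, y ∈ Metric.closedBall (0 : E) b := ae_iff.2 hν
  refine ae_iff.1 ((ae_map_iff measurable_add.aemeasurable
    (p := (· ∈ Metric.closedBall (0 : E) (a + b))) measurableSet_closedBall).2 ?_)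
  filter_upwards [quasiMeasurePreserving_fst.ae hμ', quasiMeasurePreserving_snd.ae hν']
    with z hz₁ hz₂
  rw [mem_closedBall_zero_iff] at *
  exact (norm_add_le _ _).trans (add_le_add hz₁ hz₂)

end MeasureTheory.Measure

open MeasureTheory.Measure

theorem card_rootsC {p : ℤ[X]} (hp : p.Monic) : Multiset.card (rootsC p) = p.natDegree := by
  rw [rootsC, ← (IsAlgClosed.splits _).natDegree_eq_card_roots, hp.natDegree_map]

theorem Delta_eq_empirical {p : ℤ[X]} (hp : p.Monic) : Delta p = empirical (rootsC p) := by
  rw [Delta, empirical, card_rootsC hp]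

theorem exists_monic_rootsC_eq_add {p q : ℤ[X]} (hp : p.Monic) (hq : q.Monic) :
    ∃ r : ℤ[X], r.Monic ∧ rootsC r = (rootsC p ×ˢ rootsC q).map fun ab => ab.1 + ab.2 :=
  exists_monic_map_roots_eq_add _ (Int.castRingHom ℂ).injective_int hp hq

theorem Delta_conv_Delta {p q r : ℤ[X]} (hp : p.Monic) (hq : q.Monic) (hr : r.Monic)
    (hroots : rootsC r = (rootsC p ×ˢ rootsC q).map fun ab => ab.1 + ab.2) :
    Delta p ∗ Delta q = Delta r := by
  rw [Delta_eq_empirical hp, Delta_eq_empirical hq, Delta_eq_empirical hr, empirical_conv, hroots]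

theorem WeakLim.eventually_ne_zero {μs : ℕ → Measure ℂ} {μ : Measure ℂ} [IsProbabilityMeasure μ]
    (h : WeakLim μs μ) : ∀ᶠ n in atTop, μs n ≠ 0 := by
  have hone := h 1
  simp only [BoundedContinuousFunction.coe_one, Pi.one_apply, integral_const, smul_eq_mul,
    mul_one, probReal_univ] at hone
  filter_upwards [hone.eventually_ne one_ne_zero] with n hn hzero
  simp [hzero] at hn

theorem WeakLim.eventually_isProbabilityMeasure_Delta {p : ℕ → ℤ[X]} {μ : Measure ℂ}
    [IsProbabilityMeasure μ] (hp : ∀ n, (p n).Monic) (h : WeakLim (fun n => Delta (p n)) μ) :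
    ∀ᶠ n in atTop, IsProbabilityMeasure (Delta (p n)) := by
  filter_upwards [h.eventually_ne_zero] with n hn
  rw [Delta_eq_empirical (hp n)] at hn ⊢
  exact isProbabilityMeasure_empirical fun h0 => hn (by rw [h0, empirical_zero])

theorem weakLim_add_atTop_iff {μs : ℕ → Measure ℂ} {μ : Measure ℂ} (k : ℕ) :
    WeakLim (fun n => μs (n + k)) μ ↔ WeakLim μs μ :=
  forall_congr' fun f => tendsto_add_atTop_iff_nat (f := fun n => ∫ z, f z ∂μs n) k

theorem WeakLim.conv_of_forall_isProbabilityMeasure {μs νs : ℕ → Measure ℂ} {μ ν : Measure ℂ}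
    [IsProbabilityMeasure μ] [IsProbabilityMeasure ν]
    (hμs : ∀ n, IsProbabilityMeasure (μs n)) (hνs : ∀ n, IsProbabilityMeasure (νs n))
    (hμ : WeakLim μs μ) (hν : WeakLim νs ν) :
    WeakLim (fun n => μs n ∗ νs n) (μ ∗ ν) := by
  let P : ℕ → ProbabilityMeasure ℂ := fun n => ⟨μs n, hμs n⟩
  let Q : ℕ → ProbabilityMeasure ℂ := fun n => ⟨νs n, hνs n⟩
  have hP : Tendsto P atTop (𝓝 ⟨μ, inferInstance⟩) :=
    ProbabilityMeasure.tendsto_iff_forall_integral_tendsto.2 hμ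
  have hQ : Tendsto Q atTop (𝓝 ⟨ν, inferInstance⟩) :=
    ProbabilityMeasure.tendsto_iff_forall_integral_tendsto.2 hν
  have hconv := ((ProbabilityMeasure.continuous_map continuous_add).comp
    ProbabilityMeasure.continuous_prod).continuousAt.tendsto.comp (hP.prodMk_nhds hQ)
  exact ProbabilityMeasure.tendsto_iff_forall_integral_tendsto.1 hconv

theorem WeakLim.conv {μs νs : ℕ → Measure ℂ} {μ ν : Measure ℂ}
    [IsProbabilityMeasure μ] [IsProbabilityMeasure ν]
    (hμs : ∀ᶠ n in atTop, IsProbabilityMeasure (μs n))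
    (hνs : ∀ᶠ n in atTop, IsProbabilityMeasure (νs n))
    (hμ : WeakLim μs μ) (hν : WeakLim νs ν) :
    WeakLim (fun n => μs n ∗ νs n) (μ ∗ ν) := by
  obtain ⟨N, hN⟩ := (hμs.and hνs).exists_forall_of_atTop
  rw [← weakLim_add_atTop_iff N] at hμ hν ⊢
  exact hμ.conv_of_forall_isProbabilityMeasure (fun n => (hN _ (Nat.le_add_left N n)).1)
    (fun n => (hN _ (Nat.le_add_left N n)).2) hν

theorem stmt10 (μ ν : Measure ℂ) (l : ℝ) (hμ : IsIntegerMeasure μ) (hν : IsIntegerMeasure ν)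
    (hμs : μ (Metric.closedBall 0 l)ᶜ = 0) (hνs : ν (Metric.closedBall 0 l)ᶜ = 0) :
    IsIntegerMeasure ((μ.prod ν).map (fun x : ℂ × ℂ => x.1 + x.2)) ∧
      ((μ.prod ν).map (fun x : ℂ × ℂ => x.1 + x.2)) (Metric.closedBall 0 (2 * l))ᶜ = 0 := by
  obtain ⟨hμP, p, a, hpm, hpa, hpw⟩ := hμ
  obtain ⟨hνP, q, b, hqm, hqb, hqw⟩ := hν
  choose r hrm hr using fun n => exists_monic_rootsC_eq_add (hpm n) (hqm n)
  change IsIntegerMeasure (μ ∗ ν) ∧ (μ ∗ ν) _ = 0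
  refine ⟨⟨inferInstance, r, a + b, hrm, fun n z hz => ?_, ?_⟩, ?_⟩
  · rw [hr n, Multiset.mem_map] at hz
    obtain ⟨⟨x, y⟩, hxy, rfl⟩ := hz
    rw [Multiset.mem_product] at hxy
    exact (norm_add_le x y).trans (add_le_add (hpa n x hxy.1) (hqb n y hxy.2))
  · simp_rw [← Delta_conv_Delta (hpm _) (hqm _) (hrm _) (hr _)]
    exact WeakLim.conv (hpw.eventually_isProbabilityMeasure_Delta hpm)
      (hqw.eventually_isProbabilityMeasure_Delta hqm) hpw hqw
  · rw [two_mul]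
    exact conv_compl_closedBall_null hμs hνs
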